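/- Let f : ℂ^N → ℝ be differentiable (over ℝ) with L-Lipschitz gradient ∇f for some L > 0, let h : ℂ^N → ℝ be convex and differentiable, and set F = h + f. Let C ⊆ ℂ^N be a nonempty closed convex set with F* := inf_{x ∈ C} F(x) finite. Let 0 < η < η̄ and ν > 0. Suppose a sequence x₁, x₂, … in C is generated as follows: for each k, B_k ∈ ℂ^{N×N} is Hermitian with η·I_N ⪯ B_k ⪯ η̄·I_N, the stepsize satisfies 0 < α_min ≤ α_k ≤ min{η̄/ν, η/L} where α_min := inf_k α_k > 0, and x_{k+1} is a minimizer over C of x̄ ↦ S_h(x̄, x_k, ∇f(x_k), B_k, α_k). Moreover suppose the proximal Polyak–Łojasiewicz inequality D_h^C(z, ∇f(z), I_N, α/η̄) ≥ 2ν·(F(z) − F*) holds for all z ∈ C and all α ∈ (0, η/L]. Then for every k ≥ 1, F(x_{k+1}) − F* ≤ (1 − ν·α_min/η̄)^k · (F(x₁) − F*). -/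

import Mathlib

open scoped ComplexOrder

noncomputable section

/-- `ℂ^N` with the standard complex inner product (conjugate-linear in the
first argument) and the induced norm. -/
abbrev EC (N : ℕ) := EuclideanSpace ℂ (Fin N)

/-- Weighted squared norm `‖z‖_W² = zᴴ W z` (its real part, which is the full
value when `W` is Hermitian). -/
def wnorm2 {N : ℕ} (W : Matrix (Fin N) (Fin N) ℂ) (z : EC N) : ℝ :=
  (dotProduct (fun i => starRingEnd ℂ (z i)) (W.mulVec (fun i => z i))).re

/-- Surrogate `S_h(x̄, x, g, W, α) = Re⟨g, x̄ − x⟩ + (1/(2α))‖x̄ − x‖_W² + h(x̄) − h(x)`. -/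
def Sh {N : ℕ} (h : EC N → ℝ) (W : Matrix (Fin N) (Fin N) ℂ) (α : ℝ)
    (g x xb : EC N) : ℝ :=
  (inner ℂ g (xb - x) : ℂ).re + (1 / (2 * α)) * wnorm2 W (xb - x) + h xb - h x

/-- `D_h^C(x, g, W, α) = −(2/α)·inf_{x̄ ∈ C} S_h(x̄, x, g, W, α)`. -/
def Dh {N : ℕ} (h : EC N → ℝ) (C : Set (EC N)) (W : Matrix (Fin N) (Fin N) ℂ)
    (α : ℝ) (g x : EC N) : ℝ :=
  -(2 / α) * sInf ((fun xb => Sh h W α g x xb) '' C)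

/-- The real-linear continuous functional `d ↦ Re⟨g, d⟩`, used to say that a
real-differentiable `f : ℂ^N → ℝ` has gradient `g` at a point. -/
def gradDual {N : ℕ} (g : EC N) : EC N →L[ℝ] ℝ :=
  Complex.reCLM.comp ((innerSL ℂ g).restrictScalars ℝ)

/-- The rank-one matrix `u·uᴴ` with entries `uᵢ · conj(uⱼ)`. -/
def rankOne {N : ℕ} (u : EC N) : Matrix (Fin N) (Fin N) ℂ :=
  Matrix.vecMulVec (fun i => u i) (fun i => starRingEnd ℂ (u i))

end

/-!
Each iteration is a sufficient-decrease step. The descent lemma for the `L`-smooth `f`, together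
with `η I ⪯ B_k` and `α_k L ≤ η`, gives `F(x_{k+1}) − F(x_k) ≤ S_h(x_{k+1}, x_k, ∇f(x_k), B_k, α_k)`.
By minimality of `x_{k+1}` and `B_k ⪯ η̄ I`, this is at most the infimum over `C` of the surrogate
with weight `I` and stepsize `α_k / η̄`, which the proximal PL inequality bounds by
`−(ν α_k / η̄)(F(x_k) − F*)`. Hence `F(x_{k+1}) − F* ≤ (1 − ν α_k / η̄)(F(x_k) − F*)`, and
`α_k ≥ α_min` turns this into a geometric rate.
-/

section Descent

variable {E : Type*} [NormedAddCommGroup E] [NormedSpace ℝ E]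

theorem le_add_fderiv_add_of_lipschitz_fderiv {f : E → ℝ} {f' : E → E →L[ℝ] ℝ} {L : ℝ}
    (hf : ∀ z, HasFDerivAt f (f' z) z) (hlip : ∀ z₁ z₂, ‖f' z₁ - f' z₂‖ ≤ L * ‖z₁ - z₂‖)
    (x y : E) : f y ≤ f x + f' x (y - x) + L / 2 * ‖y - x‖ ^ 2 := by
  set d := y - x
  let φ : ℝ → ℝ := fun t => f (x + t • d) - t * f' x d - L / 2 * ‖d‖ ^ 2 * t ^ 2
  have hφ : ∀ t, HasDerivAt φ (f' (x + t • d) d - f' x d - L * ‖d‖ ^ 2 * t) t := by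
    intro t
    have hline : HasDerivAt (fun t : ℝ => x + t • d) d t := by
      simpa using ((hasDerivAt_id t).smul_const d).const_add x
    exact (((hf _).comp_hasDerivAt t hline).sub ((hasDerivAt_id t).mul_const (f' x d))).sub
      ((hasDerivAt_pow 2 t).const_mul (L / 2 * ‖d‖ ^ 2)) |>.congr_deriv (by
        simp only [one_mul, Nat.cast_ofNat, Nat.add_one_sub_one, pow_one, sub_right_inj]; ring)
  have hφ' : ∀ t ∈ interior (Set.Icc (0 : ℝ) 1),
      f' (x + t • d) d - f' x d - L * ‖d‖ ^ 2 * t ≤ 0 := by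
    intro t ht
    rw [interior_Icc] at ht
    have : (f' (x + t • d) - f' x) d ≤ L * ‖d‖ ^ 2 * t :=
      calc (f' (x + t • d) - f' x) d ≤ ‖f' (x + t • d) - f' x‖ * ‖d‖ :=
            (le_abs_self _).trans ((f' (x + t • d) - f' x).le_opNorm d)
        _ ≤ L * ‖x + t • d - x‖ * ‖d‖ := by gcongr; exact hlip _ _
        _ = L * ‖d‖ ^ 2 * t := by
            rw [add_sub_cancel_left, norm_smul, Real.norm_of_nonneg ht.1.le]; ring
    simpa [sub_nonpos] using this
  have hanti : AntitoneOn φ (Set.Icc 0 1) :=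
    antitoneOn_of_hasDerivWithinAt_nonpos (convex_Icc 0 1)
      (fun t _ => (hφ t).continuousAt.continuousWithinAt)
      (fun t _ => (hφ t).hasDerivWithinAt) hφ'
  have hφ1 : φ 1 = f y - f' x d - L / 2 * ‖d‖ ^ 2 := by simp [φ, d]
  have hφ0 : φ 0 = f x := by simp [φ]
  have := hanti (Set.left_mem_Icc.2 zero_le_one) (Set.right_mem_Icc.2 zero_le_one) zero_le_one
  linarith

end Descent

section Gradient

variable {N : ℕ}

lemma gradDual_apply (g d : EC N) : gradDual g d = (inner ℂ g d : ℂ).re := rfl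

lemma gradDual_sub (a b : EC N) : gradDual a - gradDual b = gradDual (a - b) := by
  ext d
  simp [gradDual_apply]

lemma norm_gradDual_le (g : EC N) : ‖gradDual g‖ ≤ ‖g‖ :=
  ContinuousLinearMap.opNorm_le_bound _ (norm_nonneg g) fun d =>
    (Complex.abs_re_le_norm _).trans (norm_inner_le_norm g d)

lemma le_add_re_inner_add_of_lipschitz_grad {f : EC N → ℝ} {gradf : EC N → EC N} {L : ℝ}
    (hf : ∀ z, HasFDerivAt f (gradDual (gradf z)) z)
    (hlip : ∀ z₁ z₂, ‖gradf z₁ - gradf z₂‖ ≤ L * ‖z₁ - z₂‖) (x y : EC N) :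
    f y ≤ f x + (inner ℂ (gradf x) (y - x) : ℂ).re + L / 2 * ‖y - x‖ ^ 2 :=
  le_add_fderiv_add_of_lipschitz_fderiv hf
    (fun z₁ z₂ => by rw [gradDual_sub]; exact (norm_gradDual_le _).trans (hlip z₁ z₂)) x y

end Gradient

section WeightedNorm

variable {N : ℕ}

lemma wnorm2_nonneg {W : Matrix (Fin N) (Fin N) ℂ} (hW : W.PosSemidef) (z : EC N) :
    0 ≤ wnorm2 W z :=
  (Complex.le_def.mp (hW.dotProduct_mulVec_nonneg (fun i => z i))).1

lemma wnorm2_sub (A B : Matrix (Fin N) (Fin N) ℂ) (z : EC N) :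
    wnorm2 (A - B) z = wnorm2 A z - wnorm2 B z := by
  simp [wnorm2, Matrix.sub_mulVec, dotProduct_sub]

lemma wnorm2_smul (c : ℝ) (W : Matrix (Fin N) (Fin N) ℂ) (z : EC N) :
    wnorm2 (c • W) z = c * wnorm2 W z := by
  simp [wnorm2, Matrix.smul_mulVec, dotProduct_smul]

lemma wnorm2_one (z : EC N) : wnorm2 1 z = ‖z‖ ^ 2 := by
  rw [norm_sq_eq_re_inner (𝕜 := ℂ), EuclideanSpace.inner_eq_star_dotProduct, dotProduct_comm]
  simp only [wnorm2, Matrix.one_mulVec, RCLike.re_to_complex]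
  rfl

lemma mul_norm_sq_le_wnorm2 {W : Matrix (Fin N) (Fin N) ℂ} {c : ℝ}
    (hW : (W - c • (1 : Matrix (Fin N) (Fin N) ℂ)).PosSemidef) (z : EC N) :
    c * ‖z‖ ^ 2 ≤ wnorm2 W z := by
  have := wnorm2_nonneg hW z
  rwa [wnorm2_sub, wnorm2_smul, wnorm2_one, sub_nonneg] at this

lemma wnorm2_le_mul_norm_sq {W : Matrix (Fin N) (Fin N) ℂ} {c : ℝ}
    (hW : (c • (1 : Matrix (Fin N) (Fin N) ℂ) - W).PosSemidef) (z : EC N) :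
    wnorm2 W z ≤ c * ‖z‖ ^ 2 := by
  have := wnorm2_nonneg hW z
  rwa [wnorm2_sub, wnorm2_smul, wnorm2_one, sub_nonneg] at this

end WeightedNorm

section Surrogate

variable {N : ℕ} {h f : EC N → ℝ} {gradf : EC N → EC N} {B : Matrix (Fin N) (Fin N) ℂ}

lemma sub_le_Sh {L η α : ℝ} (hfdiff : ∀ z, HasFDerivAt f (gradDual (gradf z)) z)
    (hlip : ∀ z₁ z₂, ‖gradf z₁ - gradf z₂‖ ≤ L * ‖z₁ - z₂‖)
    (hB : (B - η • (1 : Matrix (Fin N) (Fin N) ℂ)).PosSemidef) (hα : 0 < α) (hαL : α * L ≤ η)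
    (x y : EC N) : h y + f y - (h x + f x) ≤ Sh h B α (gradf x) x y := by
  have hdesc := le_add_re_inner_add_of_lipschitz_grad hfdiff hlip x y
  have hquad : L / 2 * ‖y - x‖ ^ 2 ≤ 1 / (2 * α) * wnorm2 B (y - x) :=
    calc L / 2 * ‖y - x‖ ^ 2 ≤ 1 / (2 * α) * (η * ‖y - x‖ ^ 2) := by
          rw [div_mul_eq_mul_div, one_div_mul_eq_div, div_le_div_iff₀ two_pos (by positivity)]
          nlinarith [sq_nonneg ‖y - x‖]
      _ ≤ 1 / (2 * α) * wnorm2 B (y - x) := by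
          gcongr
          exact mul_norm_sq_le_wnorm2 hB _
  rw [Sh]
  linarith

lemma Sh_le_Sh_one {ηb α : ℝ} (hB : (ηb • (1 : Matrix (Fin N) (Fin N) ℂ) - B).PosSemidef)
    (hα : 0 < α) (hηb : 0 < ηb) (g x y : EC N) :
    Sh h B α g x y ≤ Sh h 1 (α / ηb) g x y := by
  have hquad : 1 / (2 * α) * wnorm2 B (y - x) ≤ 1 / (2 * (α / ηb)) * wnorm2 1 (y - x) :=
    calc 1 / (2 * α) * wnorm2 B (y - x) ≤ 1 / (2 * α) * (ηb * ‖y - x‖ ^ 2) := by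
          gcongr
          exact wnorm2_le_mul_norm_sq hB _
      _ = 1 / (2 * (α / ηb)) * wnorm2 1 (y - x) := by
          rw [wnorm2_one]
          field_simp
  simp only [Sh]
  linarith

lemma sInf_Sh_le_of_le_Dh {C : Set (EC N)} {W : Matrix (Fin N) (Fin N) ℂ} {β c : ℝ} {g x : EC N}
    (hβ : 0 < β) (hD : c ≤ Dh h C W β g x) :
    sInf ((fun y => Sh h W β g x y) '' C) ≤ -(β / 2 * c) := by
  have := mul_le_mul_of_nonneg_left hD (half_pos hβ).le
  rw [Dh, show β / 2 * (-(2 / β) * sInf ((fun y => Sh h W β g x y) '' C))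
    = -sInf ((fun y => Sh h W β g x y) '' C) by field_simp] at this
  linarith

theorem sub_le_mul_of_isMinOn_Sh {C : Set (EC N)} {L η ηb ν α Fstar : ℝ} {x y : EC N}
    (hfdiff : ∀ z, HasFDerivAt f (gradDual (gradf z)) z)
    (hlip : ∀ z₁ z₂, ‖gradf z₁ - gradf z₂‖ ≤ L * ‖z₁ - z₂‖)
    (hBlb : (B - η • (1 : Matrix (Fin N) (Fin N) ℂ)).PosSemidef)
    (hBub : (ηb • (1 : Matrix (Fin N) (Fin N) ℂ) - B).PosSemidef) (hηb : 0 < ηb)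
    (hα : 0 < α) (hαL : α * L ≤ η) (hC : C.Nonempty)
    (hmin : IsMinOn (fun z => Sh h B α (gradf x) x z) C y)
    (hPL : Dh h C 1 (α / ηb) (gradf x) x ≥ 2 * ν * (h x + f x - Fstar)) :
    h y + f y - Fstar ≤ (1 - ν * α / ηb) * (h x + f x - Fstar) := by
  have hdesc := sub_le_Sh (h := h) hfdiff hlip hBlb hα hαL x y
  have hinf : Sh h B α (gradf x) x y ≤ sInf ((fun z => Sh h 1 (α / ηb) (gradf x) x z) '' C) := by
    refine le_csInf (hC.image _) ?_
    rintro _ ⟨z, hz, rfl⟩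
    exact (hmin hz).trans (Sh_le_Sh_one hBub hα hηb _ _ _)
  have hPL' := sInf_Sh_le_of_le_Dh (div_pos hα hηb) hPL
  have hrate : α / ηb / 2 * (2 * ν * (h x + f x - Fstar)) = ν * α / ηb * (h x + f x - Fstar) := by
    ring
  linarith

end Surrogate

theorem stmt16_general {N : ℕ} (f : EC N → ℝ) (gradf : EC N → EC N) (L : ℝ) (hL : 0 < L)
    (hfdiff : ∀ z : EC N, HasFDerivAt f (gradDual (gradf z)) z)
    (hlip : ∀ z₁ z₂ : EC N, ‖gradf z₁ - gradf z₂‖ ≤ L * ‖z₁ - z₂‖)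
    (h : EC N → ℝ)
    (F : EC N → ℝ) (hF : F = fun z => h z + f z)
    (C : Set (EC N)) (hCne : C.Nonempty)
    (Fstar : ℝ) (hFstar : IsGLB (F '' C) Fstar)
    (η ηb : ℝ) (hη : 0 < η) (hηηb : η < ηb) (ν : ℝ) (hν : 0 < ν)
    (x : ℕ → EC N) (B : ℕ → Matrix (Fin N) (Fin N) ℂ) (α : ℕ → ℝ)
    (hxC : ∀ k, 1 ≤ k → x k ∈ C)
    (hBlb : ∀ k, 1 ≤ k → (B k - η • (1 : Matrix (Fin N) (Fin N) ℂ)).PosSemidef)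
    (hBub : ∀ k, 1 ≤ k → (ηb • (1 : Matrix (Fin N) (Fin N) ℂ) - B k).PosSemidef)
    (αmin : ℝ) (hαmin : 0 < αmin)
    (hαlb : ∀ k, 1 ≤ k → αmin ≤ α k)
    (hαub : ∀ k, 1 ≤ k → α k ≤ min (ηb / ν) (η / L))
    (hupd : ∀ k, 1 ≤ k →
      IsMinOn (fun xb => Sh h (B k) (α k) (gradf (x k)) (x k) xb) C (x (k + 1)))
    (hPL : ∀ z ∈ C, ∀ α' : ℝ, 0 < α' → α' ≤ η / L →
      Dh h C 1 (α' / ηb) (gradf z) z ≥ 2 * ν * (F z - Fstar)) :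
    ∀ k, 1 ≤ k →
      F (x (k + 1)) - Fstar ≤ (1 - ν * αmin / ηb) ^ k * (F (x 1) - Fstar) := by
  subst hF
  have hηb : 0 < ηb := hη.trans hηηb
  have hα : ∀ k, 1 ≤ k → 0 < α k := fun k hk => hαmin.trans_le (hαlb k hk)
  have hq : 0 ≤ 1 - ν * αmin / ηb := by
    have hαν : αmin ≤ ηb / ν := (hαlb 1 le_rfl).trans ((hαub 1 le_rfl).trans (min_le_left _ _))
    rw [sub_nonneg, div_le_one hηb]
    exact (le_div_iff₀' hν).1 hαν
  have hstep : ∀ k, 1 ≤ k → h (x (k + 1)) + f (x (k + 1)) - Fstar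
      ≤ (1 - ν * αmin / ηb) * (h (x k) + f (x k) - Fstar) := by
    intro k hk
    have hαL : α k ≤ η / L := (hαub k hk).trans (min_le_right _ _)
    have hgap : 0 ≤ h (x k) + f (x k) - Fstar := sub_nonneg.2 (hFstar.1 ⟨x k, hxC k hk, rfl⟩)
    calc _ ≤ (1 - ν * α k / ηb) * (h (x k) + f (x k) - Fstar) :=
          sub_le_mul_of_isMinOn_Sh hfdiff hlip (hBlb k hk) (hBub k hk) hηb (hα k hk)
            ((le_div_iff₀ hL).1 hαL) hCne (hupd k hk) (hPL _ (hxC k hk) _ (hα k hk) hαL)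
      _ ≤ (1 - ν * αmin / ηb) * (h (x k) + f (x k) - Fstar) := by
          gcongr
          exact hαlb k hk
  intro k _
  exact le_geom (u := fun i => h (x (i + 1)) + f (x (i + 1)) - Fstar) hq k
    fun i _ => hstep (i + 1) le_add_self

/-- Linear convergence of the cost values under the PL
inequality. Let `f` be real-differentiable with `L`-Lipschitz gradient,
`h` convex differentiable, `F = h + f`, `C` nonempty closed convex with finite
infimum `F*`. Let `0 < η < η̄`, `ν > 0`, and suppose the sequence
`x₁, x₂, …` in `C` is generated with Hermitian `η·I ⪯ B_k ⪯ η̄·I`, stepsizes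
`0 < α_min ≤ α_k ≤ min{η̄/ν, η/L}`, and `x_{k+1}` a minimizer over `C` of
`x̄ ↦ S_h(x̄, x_k, ∇f(x_k), B_k, α_k)`. If the proximal PL inequality
`D_h^C(z, ∇f(z), I, α/η̄) ≥ 2ν(F(z) − F*)` holds for all `z ∈ C` and all
`α ∈ (0, η/L]`, then for every `k ≥ 1`,
`F(x_{k+1}) − F* ≤ (1 − να_min/η̄)^k (F(x₁) − F*)`. -/
theorem stmt16 {N : ℕ} (f : EC N → ℝ) (gradf : EC N → EC N) (L : ℝ) (hL : 0 < L)
    (hfdiff : ∀ z : EC N, HasFDerivAt f (gradDual (gradf z)) z)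
    (hlip : ∀ z₁ z₂ : EC N, ‖gradf z₁ - gradf z₂‖ ≤ L * ‖z₁ - z₂‖)
    (h : EC N → ℝ) (hconv : ConvexOn ℝ Set.univ h) (hdiff : Differentiable ℝ h)
    (F : EC N → ℝ) (hF : F = fun z => h z + f z)
    (C : Set (EC N)) (hCne : C.Nonempty) (hCcl : IsClosed C) (hCcv : Convex ℝ C)
    (Fstar : ℝ) (hFstar : IsGLB (F '' C) Fstar)
    (η ηb : ℝ) (hη : 0 < η) (hηηb : η < ηb) (ν : ℝ) (hν : 0 < ν)
    (x : ℕ → EC N) (B : ℕ → Matrix (Fin N) (Fin N) ℂ) (α : ℕ → ℝ)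
    (hxC : ∀ k, 1 ≤ k → x k ∈ C)
    (hBH : ∀ k, 1 ≤ k → (B k).IsHermitian)
    (hBlb : ∀ k, 1 ≤ k → (B k - η • (1 : Matrix (Fin N) (Fin N) ℂ)).PosSemidef)
    (hBub : ∀ k, 1 ≤ k → (ηb • (1 : Matrix (Fin N) (Fin N) ℂ) - B k).PosSemidef)
    (αmin : ℝ) (hαmin : 0 < αmin)
    (hαlb : ∀ k, 1 ≤ k → αmin ≤ α k)
    (hαub : ∀ k, 1 ≤ k → α k ≤ min (ηb / ν) (η / L))
    (hupd : ∀ k, 1 ≤ k →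
      IsMinOn (fun xb => Sh h (B k) (α k) (gradf (x k)) (x k) xb) C (x (k + 1)))
    (hPL : ∀ z ∈ C, ∀ α' : ℝ, 0 < α' → α' ≤ η / L →
      Dh h C 1 (α' / ηb) (gradf z) z ≥ 2 * ν * (F z - Fstar)) :
    ∀ k, 1 ≤ k →
      F (x (k + 1)) - Fstar ≤ (1 - ν * αmin / ηb) ^ k * (F (x 1) - Fstar) :=
  stmt16_general f gradf L hL hfdiff hlip h F hF C hCne Fstar hFstar η ηb hη hηηb ν hν x B α hxC
    hBlb hBub αmin hαmin hαlb hαub hupd hPL
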